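/- arXiv:0906.0835 — 3 statements merged into one kernel-verified Lean document; each statement's English description precedes it below -/
import Mathlib

section
/- Let g₂ < s < g₁, α > 0, p* = α(s - g₂)/((α+1)(g₁ - s) + α(s - g₂)), and C_α = (s - g₂ - p*(g₁ - g₂))/((1 - p*)·((1 - p*)/p*)^α). Define U(p) = p·g₁ + (1-p)·g₂ + C_α·(1-p)·((1-p)/p)^α for p ∈ (0,1). Then U(p*) = s and U'(p*) = 0. -/
/-! With `w p = (1 - p) * ((1 - p) / p) ^ α`, the constant `Cα` is chosen so that
`Cα * w p* = s - g₂ - p* (g₁ - g₂)`, which is value matching. Since `w' / w = -(p + α) / (p (1 - p))`,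
smooth pasting reduces to `(g₁ - g₂) p (1 - p) = (s - g₂ - p (g₁ - g₂)) (p + α)`; its quadratic terms
cancel, and the remaining linear equation in `p` is solved exactly by the cut-off `p*`. -/

theorem hasDerivAt_one_sub_mul_odds_rpow (α : ℝ) {p : ℝ} (hp₀ : p ≠ 0) (hp₁ : p ≠ 1) :
    HasDerivAt (fun q : ℝ => (1 - q) * ((1 - q) / q) ^ α)
      (-(p + α) / (p * (1 - p)) * ((1 - p) * ((1 - p) / p) ^ α)) p := by
  have hodds : (1 - p) / p ≠ 0 := div_ne_zero (sub_ne_zero.2 hp₁.symm) hp₀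
  have hderiv_odds : HasDerivAt (fun q : ℝ => (1 - q) / q) (-1 / p ^ 2) p :=
    (((hasDerivAt_id p).const_sub 1).div (hasDerivAt_id p) hp₀).congr_deriv (by simp only [id]; ring)
  refine (((hasDerivAt_id p).const_sub 1).mul (hderiv_odds.rpow_const (Or.inl hodds))).congr_deriv ?_
  rw [Real.rpow_sub_one hodds, id]
  generalize ((1 - p) / p) ^ α = t
  field_simp [sub_ne_zero.2 hp₁.symm]
  ring

theorem cutoff_mem_Ioo {s g₁ g₂ α : ℝ} (h₂ : g₂ < s) (h₁ : s < g₁) (hα : 0 < α) :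
    α * (s - g₂) / ((α + 1) * (g₁ - s) + α * (s - g₂)) ∈ Set.Ioo 0 1 := by
  have hden : 0 < (α + 1) * (g₁ - s) + α * (s - g₂) := by nlinarith
  exact ⟨div_pos (by nlinarith) hden, (div_lt_one hden).2 (by nlinarith)⟩

theorem cutoff_indifference {s g₁ g₂ α p : ℝ} (hden : (α + 1) * (g₁ - s) + α * (s - g₂) ≠ 0)
    (hp : p = α * (s - g₂) / ((α + 1) * (g₁ - s) + α * (s - g₂))) :
    (g₁ - g₂) * (p * (1 - p)) = (s - g₂ - p * (g₁ - g₂)) * (p + α) := by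
  subst hp
  field_simp
  ring

theorem value_matching_smooth_pasting (s g₁ g₂ α : ℝ) (h₂ : g₂ < s) (h₁ : s < g₁)
    (hα : 0 < α)
    (pstar : ℝ) (hp : pstar = α * (s - g₂) / ((α + 1) * (g₁ - s) + α * (s - g₂)))
    (Cα : ℝ) (hC : Cα = (s - g₂ - pstar * (g₁ - g₂)) /
      ((1 - pstar) * ((1 - pstar) / pstar) ^ α))
    (U : ℝ → ℝ)
    (hU : U = fun p => p * g₁ + (1 - p) * g₂ + Cα * (1 - p) * ((1 - p) / p) ^ α) :
    U pstar = s ∧ HasDerivAt U 0 pstar := by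
  obtain ⟨hp₀, hp₁⟩ : pstar ∈ Set.Ioo 0 1 := hp ▸ cutoff_mem_Ioo h₂ h₁ hα
  have hindiff : (g₁ - g₂) * (pstar * (1 - pstar)) = (s - g₂ - pstar * (g₁ - g₂)) * (pstar + α) :=
    cutoff_indifference (by nlinarith) hp
  set w : ℝ → ℝ := fun q => (1 - q) * ((1 - q) / q) ^ α with hw
  have hw_pos : 0 < w pstar :=
    mul_pos (sub_pos.2 hp₁) (Real.rpow_pos_of_pos (div_pos (sub_pos.2 hp₁) hp₀) α)
  have hCw : Cα * w pstar = s - g₂ - pstar * (g₁ - g₂) := by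
    rw [hC]
    exact div_mul_cancel₀ _ hw_pos.ne'
  have hUw : U = fun p => p * g₁ + (1 - p) * g₂ + Cα * w p := by
    simp only [hU, hw, mul_assoc]
  rw [hUw]
  refine ⟨by linear_combination hCw, ?_⟩
  have hderiv : HasDerivAt (fun p => p * g₁ + (1 - p) * g₂ + Cα * w p)
      (g₁ - g₂ - (pstar + α) / (pstar * (1 - pstar)) * (Cα * w pstar)) pstar :=
    ((((hasDerivAt_id pstar).mul_const g₁).add
      (((hasDerivAt_id pstar).const_sub 1).mul_const g₂)).add
      ((hasDerivAt_one_sub_mul_odds_rpow α hp₀.ne' hp₁.ne).const_mul Cα)).congr_deriv (by ring)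
  have hslope : g₁ - g₂ - (pstar + α) / (pstar * (1 - pstar)) * (Cα * w pstar) = 0 := by
    rw [hCw]
    field_simp [(sub_pos.2 hp₁).ne']
    linear_combination hindiff
  exact hslope ▸ hderiv
end

section
/- Let α > 1, g₂ < s < g₁, p₀ ∈ (0,1), and K > 0 a constant. For ε with both p₀+ε and p₀−ε in (0,1), define V(ε) = p₀g₁ + (1-p₀)g₂ + K·[ −(α/(α+1))·((1-p₀-ε)/(p₀+ε))^{α+1} + ((1-p₀)/p₀)·((1-p₀-ε)/(p₀+ε))^{α} ]. Then for every ε > 0 with 0 < p₀ − ε and p₀ + ε < 1, we have V(ε) > V(−ε). -/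
/-!
Write `x(t) = (1 - p₀ - t) / (p₀ + t) = 1 / (p₀ + t) - 1` for the odds of the Low type under the
belief `p₀ + t`, and `f(x) = -(α / (α + 1)) x ^ (α + 1) + x(0) x ^ α`, so that
`V(t) = const + K f(x(t))`. Since `f'(x) = α x ^ (α - 1) (x(0) - x)` and
`x(0) - x(t) = t / (p₀ (p₀ + t))`, the derivative of `t ↦ f(x(t))` is `-(α / p₀) t φ(t)` with
`φ(t) = x(t) ^ (α - 1) / (p₀ + t) ^ 3` (`lowOddsWeight`). For `α ≥ 1` the function `φ` is
strictly decreasing, so the derivative of `t ↦ f(x(t)) - f(x(-t))`, namely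
`(α / p₀) t (φ(-t) - φ(t))`, is positive for `t > 0`, and this difference grows from `0` at
`t = 0`.
-/

open Set

theorem lt_of_hasDerivAt_of_deriv_add_deriv_neg_pos {h h' : ℝ → ℝ} {ε : ℝ} (hε : 0 < ε)
    (hd : ∀ t ∈ Icc (-ε) ε, HasDerivAt h (h' t) t)
    (hpos : ∀ t ∈ Ioo 0 ε, 0 < h' t + h' (-t)) : h (-ε) < h ε := by
  have hdiff : ∀ t ∈ Icc 0 ε, HasDerivAt (fun t => h t - h (-t)) (h' t + h' (-t)) t := by
    intro t ⟨ht₀, htε⟩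
    have hneg := (hd (-t) ⟨by linarith, by linarith⟩).comp t (hasDerivAt_neg t)
    exact ((hd t ⟨by linarith, htε⟩).sub hneg).congr_deriv (by ring)
  have hmono : StrictMonoOn (fun t => h t - h (-t)) (Icc 0 ε) := by
    refine strictMonoOn_of_hasDerivWithinAt_pos (f' := fun t => h' t + h' (-t)) (convex_Icc 0 ε)
      (fun t ht => (hdiff t ht).continuousAt.continuousWithinAt) (fun t ht => ?_) ?_
    · rw [interior_Icc] at ht
      exact (hdiff t (Ioo_subset_Icc_self ht)).hasDerivWithinAt
    · simpa only [interior_Icc] using hpos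
  have := hmono (left_mem_Icc.mpr hε.le) (right_mem_Icc.mpr hε.le) hε
  simp only [neg_zero, sub_self] at this
  linarith

noncomputable def lowOdds (p t : ℝ) : ℝ := (1 - p - t) / (p + t)

/-- The bracket of `V`, as the function `f` of the odds `x`. -/
noncomputable def oddsValue (α c x : ℝ) : ℝ := -(α / (α + 1)) * x ^ (α + 1) + c * x ^ α

theorem hasDerivAt_oddsValue {α c x : ℝ} (hα : α + 1 ≠ 0) (hx : 0 < x) :
    HasDerivAt (oddsValue α c) (α * x ^ (α - 1) * (c - x)) x := by
  have h₁ := (Real.hasDerivAt_rpow_const (p := α + 1) (Or.inl hx.ne')).const_mul (-(α / (α + 1)))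
  have h₂ := (Real.hasDerivAt_rpow_const (p := α) (Or.inl hx.ne')).const_mul c
  refine (h₁.add h₂).congr_deriv ?_
  rw [add_sub_cancel_right, Real.rpow_sub_one hx.ne']
  field_simp
  ring

section lowOdds

variable {p t : ℝ}

theorem lowOdds_eq (ht : p + t ≠ 0) : lowOdds p t = 1 / (p + t) - 1 := by
  rw [lowOdds]
  field_simp
  ring

theorem lowOdds_pos (h₀ : 0 < p + t) (h₁ : p + t < 1) : 0 < lowOdds p t :=
  div_pos (by linarith) h₀

theorem hasDerivAt_lowOdds (ht : p + t ≠ 0) :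
    HasDerivAt (lowOdds p) (-1 / (p + t) ^ 2) t := by
  have := ((hasDerivAt_id' t).const_sub (1 - p)).div ((hasDerivAt_id' t).const_add p) ht
  exact this.congr_deriv (by ring)

theorem strictAntiOn_lowOdds : StrictAntiOn (lowOdds p) (Ioi (-p)) := by
  intro a ha b hb hab
  have hpa : 0 < p + a := by linarith [mem_Ioi.mp ha]
  rw [lowOdds_eq hpa.ne', lowOdds_eq (by linarith)]
  gcongr

noncomputable def lowOddsWeight (α p t : ℝ) : ℝ := lowOdds p t ^ (α - 1) / (p + t) ^ 3

theorem hasDerivAt_oddsValue_lowOdds {α : ℝ} (hα : α + 1 ≠ 0) (hp : p ≠ 0)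
    (h₀ : 0 < p + t) (h₁ : p + t < 1) :
    HasDerivAt (fun t => oddsValue α ((1 - p) / p) (lowOdds p t))
      (-(α / p) * t * lowOddsWeight α p t) t := by
  refine ((hasDerivAt_oddsValue hα (lowOdds_pos h₀ h₁)).comp t
    (hasDerivAt_lowOdds h₀.ne')).congr_deriv ?_
  rw [lowOddsWeight, lowOdds_eq h₀.ne']
  field_simp
  ring

theorem strictAntiOn_lowOddsWeight {α : ℝ} (hα : 1 ≤ α) :
    StrictAntiOn (lowOddsWeight α p) (Ioo (-p) (1 - p)) := by
  intro a ⟨ha₀, ha₁⟩ b ⟨hb₀, hb₁⟩ hab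
  have hpa : 0 < p + a := by linarith
  have hodds : lowOdds p b ≤ lowOdds p a :=
    (strictAntiOn_lowOdds (mem_Ioi.mpr ha₀) (mem_Ioi.mpr hb₀) hab).le
  have hpos : 0 < lowOdds p b ^ (α - 1) :=
    Real.rpow_pos_of_pos (lowOdds_pos (by linarith) (by linarith)) _
  calc lowOdds p b ^ (α - 1) / (p + b) ^ 3 < lowOdds p b ^ (α - 1) / (p + a) ^ 3 := by
        gcongr
    _ ≤ lowOdds p a ^ (α - 1) / (p + a) ^ 3 := by
        gcongr
        exact (lowOdds_pos (by linarith) (by linarith)).le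

end lowOdds

theorem optimist_beats_pessimist_general (α g₁ g₂ p₀ K : ℝ) (hα : 1 < α)
    (hp₀ : p₀ ∈ Set.Ioo (0 : ℝ) 1) (hK : 0 < K)
    (V : ℝ → ℝ)
    (hV : V = fun ε => p₀ * g₁ + (1 - p₀) * g₂ +
      K * (-(α / (α + 1)) * ((1 - p₀ - ε) / (p₀ + ε)) ^ (α + 1)
        + ((1 - p₀) / p₀) * ((1 - p₀ - ε) / (p₀ + ε)) ^ α)) :
    ∀ ε : ℝ, 0 < ε → 0 < p₀ - ε → p₀ + ε < 1 → V ε > V (-ε) := by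
  intro ε hε hlo hhi
  obtain ⟨hp₀pos, -⟩ := hp₀
  have hgain : oddsValue α ((1 - p₀) / p₀) (lowOdds p₀ (-ε))
      < oddsValue α ((1 - p₀) / p₀) (lowOdds p₀ ε) := by
    refine lt_of_hasDerivAt_of_deriv_add_deriv_neg_pos hε
      (fun t ⟨ht₀, ht₁⟩ => hasDerivAt_oddsValue_lowOdds (by linarith) hp₀pos.ne'
        (by linarith) (by linarith)) fun t ⟨ht₀, ht₁⟩ => ?_
    have hφ : lowOddsWeight α p₀ t < lowOddsWeight α p₀ (-t) :=
      strictAntiOn_lowOddsWeight hα.le ⟨by linarith, by linarith⟩ ⟨by linarith, by linarith⟩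
        (by linarith)
    have := mul_pos (mul_pos (div_pos (by linarith : (0 : ℝ) < α) hp₀pos) ht₀) (sub_pos.mpr hφ)
    linarith
  subst hV
  simp only [oddsValue, lowOdds] at hgain
  simp only [gt_iff_lt, add_lt_add_iff_left]
  exact mul_lt_mul_of_pos_left hgain hK

theorem optimist_beats_pessimist (α s g₁ g₂ p₀ K : ℝ) (hα : 1 < α)
    (h₂ : g₂ < s) (h₁ : s < g₁) (hp₀ : p₀ ∈ Set.Ioo (0 : ℝ) 1) (hK : 0 < K)
    (V : ℝ → ℝ)
    (hV : V = fun ε => p₀ * g₁ + (1 - p₀) * g₂ +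
      K * (-(α / (α + 1)) * ((1 - p₀ - ε) / (p₀ + ε)) ^ (α + 1)
        + ((1 - p₀) / p₀) * ((1 - p₀ - ε) / (p₀ + ε)) ^ α)) :
    ∀ ε : ℝ, 0 < ε → 0 < p₀ - ε → p₀ + ε < 1 → V ε > V (-ε) :=
  optimist_beats_pessimist_general α g₁ g₂ p₀ K hα hp₀ hK V hV
end

section
/- Let r > 0, let c: [a,b] → [0,∞) and λ: [a,b] → [0,∞) be functions, and let W: [a,b] → ℝ be twice differentiable with W(a) = W(b) = 0. Suppose that for every p ∈ (a,b), (r + λ(p))·W(p) ≤ λ(p)·(sup_{[a,b]} W) + (1/2)·c(p)·W''(p), and also (r + λ(p))·W(p) ≥ λ(p)·(inf_{[a,b]} W) + (1/2)·c(p)·W''(p). Then W ≡ 0 on [a,b]. -/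
/-- Second derivative test: at an interior maximum of `W` on `(a,b)`,
any value `d` such that the derivative `g` of `W` has derivative `d` there
must be nonpositive. -/
lemma second_deriv_nonpos_at_interior_max (W g : ℝ → ℝ) (a b x d : ℝ)
    (hx : x ∈ Set.Ioo a b)
    (hW1 : ∀ p ∈ Set.Ioo a b, HasDerivAt W (g p) p)
    (hW2 : HasDerivAt g d x)
    (hmax : ∀ y ∈ Set.Ioo a b, W y ≤ W x) : d ≤ 0 := by
  -- first derivative vanishes at x
  have hloc : IsLocalMax W x :=
    Filter.eventually_of_mem (isOpen_Ioo.mem_nhds hx) hmax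
  have hgx : g x = 0 := by
    have h1 := (hW1 x hx).deriv
    have h2 := hloc.deriv_eq_zero
    rw [← h1]; exact h2
  by_contra hd
  push_neg at hd
  -- slope of g tends to d > 0, so g > 0 just to the right of x
  have hslope : Filter.Tendsto (slope g x) (nhdsWithin x {x}ᶜ) (nhds d) :=
    hasDerivAt_iff_tendsto_slope.mp hW2
  have hslope' : Filter.Tendsto (slope g x) (nhdsWithin x (Set.Ioi x)) (nhds d) :=
    hslope.mono_left (nhdsWithin_mono x (fun y hy => ne_of_gt hy))
  have h1 : ∀ᶠ y in nhdsWithin x (Set.Ioi x), 0 < slope g x y :=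
    hslope'.eventually (eventually_gt_nhds hd)
  have h2 : ∀ᶠ y in nhdsWithin x (Set.Ioi x), y ∈ Set.Ioo a b :=
    mem_nhdsWithin_of_mem_nhds (isOpen_Ioo.mem_nhds hx)
  have h3 := h1.and h2
  rw [Filter.eventually_iff] at h3
  obtain ⟨u, hu, hsub⟩ := mem_nhdsGT_iff_exists_Ioo_subset.mp h3
  have hxu : x < u := hu
  set z := (x + u) / 2 with hz
  have hxz : x < z := by simp only [hz]; linarith
  have hzu : z < u := by simp only [hz]; linarith
  have hzmem : z ∈ Set.Ioo a b := (hsub ⟨hxz, hzu⟩).2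
  -- W is strictly increasing on [x, z]
  have hIccsub : Set.Icc x z ⊆ Set.Ioo a b := fun p hp =>
    ⟨lt_of_lt_of_le hx.1 hp.1, lt_of_le_of_lt hp.2 hzmem.2⟩
  have hcont : ContinuousOn W (Set.Icc x z) := fun p hp =>
    (hW1 p (hIccsub hp)).continuousAt.continuousWithinAt
  have hmono : StrictMonoOn W (Set.Icc x z) := by
    apply strictMonoOn_of_deriv_pos (convex_Icc x z) hcont
    intro p hp
    rw [interior_Icc] at hp
    have hpm : p ∈ Set.Ioo x u := ⟨hp.1, lt_trans hp.2 hzu⟩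
    have hps := hsub hpm
    have hderiv : deriv W p = g p := (hW1 p hps.2).deriv
    rw [hderiv]
    have hslp : 0 < slope g x p := hps.1
    have : slope g x p = g p / (p - x) := by
      simp [slope, hgx, vsub_eq_sub, div_eq_inv_mul]
    rw [this] at hslp
    have hpx : 0 < p - x := by linarith [hp.1]
    have := mul_pos hslp hpx
    rwa [div_mul_cancel₀ _ (ne_of_gt hpx)] at this
  have hlt : W x < W z := hmono (Set.left_mem_Icc.mpr (le_of_lt hxz))
    (Set.right_mem_Icc.mpr (le_of_lt hxz)) hxz
  exact absurd (hmax z hzmem) (not_le.mpr hlt)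

theorem maximum_principle_uniqueness (r a b : ℝ) (hr : 0 < r) (hab : a < b)
    (c lam : ℝ → ℝ) (hc : ∀ p ∈ Set.Icc a b, 0 ≤ c p)
    (hlam : ∀ p ∈ Set.Icc a b, 0 ≤ lam p)
    (W : ℝ → ℝ)
    (hWcont : ContinuousOn W (Set.Icc a b))
    (hW1 : ∀ p ∈ Set.Ioo a b, HasDerivAt W (deriv W p) p)
    (hW2 : ∀ p ∈ Set.Ioo a b, HasDerivAt (deriv W) (deriv (deriv W) p) p)
    (hWa : W a = 0) (hWb : W b = 0)
    (hineq_le : ∀ p ∈ Set.Ioo a b,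
      (r + lam p) * W p ≤ lam p * sSup (W '' Set.Icc a b)
        + (1 / 2) * c p * deriv (deriv W) p)
    (hineq_ge : ∀ p ∈ Set.Ioo a b,
      (r + lam p) * W p ≥ lam p * sInf (W '' Set.Icc a b)
        + (1 / 2) * c p * deriv (deriv W) p) :
    ∀ p ∈ Set.Icc a b, W p = 0 := by
  have hne : (Set.Icc a b).Nonempty := ⟨a, Set.left_mem_Icc.mpr hab.le⟩
  obtain ⟨x, hxmem, hxmax⟩ := isCompact_Icc.exists_isMaxOn hne hWcont
  obtain ⟨y, hymem, hymin⟩ := isCompact_Icc.exists_isMinOn hne hWcont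
  have hxmax' : ∀ p ∈ Set.Icc a b, W p ≤ W x := fun p hp => hxmax hp
  have hymin' : ∀ p ∈ Set.Icc a b, W y ≤ W p := fun p hp => hymin hp
  have hMsup : sSup (W '' Set.Icc a b) = W x :=
    IsGreatest.csSup_eq ⟨⟨x, hxmem, rfl⟩, by
      rintro v ⟨p, hp, rfl⟩; exact hxmax' p hp⟩
  have hmInf : sInf (W '' Set.Icc a b) = W y :=
    IsLeast.csInf_eq ⟨⟨y, hymem, rfl⟩, by
      rintro v ⟨p, hp, rfl⟩; exact hymin' p hp⟩
  -- the maximum is ≤ 0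
  have hMle : W x ≤ 0 := by
    by_contra hpos
    push_neg at hpos
    have hxa : x ≠ a := fun h => by rw [h, hWa] at hpos; exact lt_irrefl _ hpos
    have hxb : x ≠ b := fun h => by rw [h, hWb] at hpos; exact lt_irrefl _ hpos
    have hxIoo : x ∈ Set.Ioo a b :=
      ⟨lt_of_le_of_ne hxmem.1 (Ne.symm hxa), lt_of_le_of_ne hxmem.2 hxb⟩
    have hd : deriv (deriv W) x ≤ 0 :=
      second_deriv_nonpos_at_interior_max W (deriv W) a b x _ hxIoo hW1
        (hW2 x hxIoo) (fun p hp => hxmax' p (Set.Ioo_subset_Icc_self hp))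
    have hineq := hineq_le x hxIoo
    rw [hMsup] at hineq
    have hc' := hc x hxmem
    nlinarith [mul_nonpos_of_nonneg_of_nonpos hc' hd, mul_pos hr hpos]
  -- the minimum is ≥ 0
  have hmge : 0 ≤ W y := by
    by_contra hneg
    push_neg at hneg
    have hya : y ≠ a := fun h => by rw [h, hWa] at hneg; exact lt_irrefl _ hneg
    have hyb : y ≠ b := fun h => by rw [h, hWb] at hneg; exact lt_irrefl _ hneg
    have hyIoo : y ∈ Set.Ioo a b :=
      ⟨lt_of_le_of_ne hymem.1 (Ne.symm hya), lt_of_le_of_ne hymem.2 hyb⟩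
    have hd : -(deriv (deriv W) y) ≤ 0 := by
      apply second_deriv_nonpos_at_interior_max (fun q => -W q)
        (fun q => -(deriv W q)) a b y _ hyIoo
        (fun p hp => (hW1 p hp).neg) ((hW2 y hyIoo).neg)
      intro p hp
      simp only [neg_le_neg_iff]
      exact hymin' p (Set.Ioo_subset_Icc_self hp)
    have hd' : 0 ≤ deriv (deriv W) y := by linarith
    have hineq := hineq_ge y hyIoo
    rw [hmInf] at hineq
    have hc' := hc y hymem
    nlinarith [mul_nonneg hc' hd', mul_pos hr (neg_pos.mpr hneg)]
  intro p hp
  have h1 := hxmax' p hp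
  have h2 := hymin' p hp
  linarith
end
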